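/- arXiv:1009.2004 — 2 statements merged into one kernel-verified Lean document; each statement's English description precedes it below -/
import Mathlib

section
/- Define the Delannoy numbers by $D(a,0)=D(0,b)=1$ and $D(a,b)=D(a-1,b)+D(a-1,b-1)+D(a,b-1)$ for $a,b\ge 1$. Then for every positive integer $n$, $\det\left(D(i+j+2,i+j+2)\right)_{0\le i,j\le n-1}=2^{\binom{n+3}{2}-3}+(2n+1)\,2^{\binom{n+2}{2}-2}-2^{\binom{n+1}{2}-1}$. -/
set_option linter.unusedSectionVars false

open Finset Matrix

namespace Stmt18Aux

/-- discrete forward difference -/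
def del (u : ℕ → ℚ) : ℕ → ℚ := fun i => u (i + 1) - u i

lemma del_iter_apply_succ (k : ℕ) (u : ℕ → ℚ) (i : ℕ) :
    del^[k] u (i + 1) = del^[k] u i + del^[k+1] u i := by
  rw [Function.iterate_succ_apply']
  simp [del]

lemma del_iter_add (k : ℕ) : ∀ (u v : ℕ → ℚ) (i : ℕ),
    del^[k] (fun j => u j + v j) i = del^[k] u i + del^[k] v i := by
  induction k with
  | zero => intro u v i; simp
  | succ k ih =>
    intro u v i
    rw [Function.iterate_succ_apply, Function.iterate_succ_apply, Function.iterate_succ_apply]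
    have h : del (fun j => u j + v j) = fun j => del u j + del v j := by
      funext j; simp [del]; ring
    rw [h]; exact ih _ _ i

lemma del_iter_shift (k : ℕ) : ∀ (u : ℕ → ℚ) (i : ℕ),
    del^[k] (fun j => u (j + 1)) i = del^[k] u (i + 1) := by
  induction k with
  | zero => intro u i; simp
  | succ k ih =>
    intro u i
    rw [Function.iterate_succ_apply, Function.iterate_succ_apply]
    have h : del (fun j => u (j + 1)) = fun j => (del u) (j + 1) := rfl
    rw [h, ih]

lemma del_iter_zero (k : ℕ) : ∀ i : ℕ, del^[k] (fun _ => (0:ℚ)) i = 0 := by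
  induction k with
  | zero => intro i; simp
  | succ k ih =>
    intro i
    rw [Function.iterate_succ_apply]
    have h : del (fun _ => (0:ℚ)) = fun _ => (0:ℚ) := by funext j; simp [del]
    rw [h]; exact ih i

/-- shifted-diagonal family -/
def FF (D : ℕ → ℕ → ℤ) (a : ℕ) : ℕ → ℚ := fun i => (D (a + i) a : ℚ)

def vv (D : ℕ → ℕ → ℤ) (a k i : ℕ) : ℚ := del^[k] (FF D a) i

def ee (D : ℕ → ℕ → ℤ) (a k : ℕ) : ℚ := vv D a k 0


section
variable (D : ℕ → ℕ → ℤ) (hD0 : ∀ a : ℕ, D a 0 = 1) (h0D : ∀ b : ℕ, D 0 b = 1)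
    (hrec : ∀ a b : ℕ, D (a + 1) (b + 1) = D a (b + 1) + D a b + D (a + 1) b)

include hD0 h0D hrec

lemma Dsym : ∀ a b : ℕ, D a b = D b a := by
  intro a
  induction a with
  | zero => intro b; rw [hD0, h0D]
  | succ a iha =>
    intro b
    induction b with
    | zero => rw [hD0, h0D]
    | succ b ihb =>
      rw [hrec, hrec, iha (b+1), iha b, ihb]
      ring

lemma del_FF_succ : ∀ a : ℕ, del (FF D (a+1)) = fun i => FF D a (i+1) + FF D a (i+2) := by
  intro a
  funext i
  show FF D (a+1) (i+1) - FF D (a+1) i = FF D a (i+1) + FF D a (i+2)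
  unfold FF
  rw [show a + 1 + (i + 1) = (a + i + 1) + 1 from by omega, hrec (a+i+1) a,
    show a + i + 1 + 1 = a + (i + 2) from by omega,
    show a + 1 + i = a + i + 1 from by omega, show a + (i+1) = a + i + 1 from by omega]
  push_cast
  ring

lemma vv_rec (a k i : ℕ) : vv D (a+1) (k+1) i = vv D a k (i+1) + vv D a k (i+2) := by
  unfold vv
  rw [Function.iterate_succ_apply, del_FF_succ D hD0 h0D hrec a]
  rw [del_iter_add]
  have h1 : del^[k] (fun j => FF D a (j + 1)) i = del^[k] (FF D a) (i+1) := del_iter_shift k _ i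
  have h2 : del^[k] (fun j => FF D a (j + 2)) i = del^[k] (FF D a) (i+2) :=
    calc del^[k] (fun j => FF D a (j + 2)) i
        = del^[k] (fun j => (fun m => FF D a (m+1)) (j+1)) i := rfl
      _ = del^[k] (fun m => FF D a (m+1)) (i+1) := del_iter_shift k (fun m => FF D a (m+1)) i
      _ = del^[k] (FF D a) (i+1+1) := del_iter_shift k (FF D a) (i+1)
      _ = del^[k] (FF D a) (i+2) := rfl
  rw [h1, h2]

lemma vv_i_succ (a k i : ℕ) : vv D a k (i+1) = vv D a k i + vv D a (k+1) i :=
  del_iter_apply_succ k _ i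

lemma vv_vanish : ∀ a k i : ℕ, a < k → vv D a k i = 0 := by
  intro a
  induction a with
  | zero =>
    intro k i hk
    obtain ⟨k', rfl⟩ : ∃ k', k = k' + 1 := ⟨k - 1, by omega⟩
    unfold vv
    rw [Function.iterate_succ_apply]
    have h : del (FF D 0) = fun _ => (0:ℚ) := by
      funext j
      show FF D 0 (j+1) - FF D 0 j = 0
      unfold FF
      rw [show 0 + (j+1) = j+1 from by omega, show 0 + j = j from by omega, hD0, hD0]
      ring
    rw [h, del_iter_zero]
  | succ a ih =>
    intro k i hk
    obtain ⟨k', rfl⟩ : ∃ k', k = k' + 1 := ⟨k - 1, by omega⟩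
    rw [vv_rec D hD0 h0D hrec, ih k' _ (by omega), ih k' _ (by omega)]
    ring

lemma vv_diag : ∀ a i : ℕ, vv D a a i = 2 ^ a := by
  intro a
  induction a with
  | zero =>
    intro i
    show FF D 0 i = 1
    unfold FF
    rw [show 0 + i = i from by omega, hD0]
    norm_num
  | succ a ih =>
    intro i
    rw [vv_rec D hD0 h0D hrec, ih, ih]
    ring

lemma ee_zero (a : ℕ) : ee D a 0 = (D a a : ℚ) := by
  show FF D a 0 = _
  unfold FF
  rw [show a + 0 = a from by omega]

lemma ee_one (a : ℕ) : ee D a 1 = (D (a+1) a : ℚ) - (D a a : ℚ) := by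
  show vv D a 1 0 = _
  have h := vv_i_succ D hD0 h0D hrec a 0 0
  have h0 : vv D a 0 0 = (D a a : ℚ) := ee_zero D hD0 h0D hrec a
  have h1 : vv D a 0 1 = (D (a+1) a : ℚ) := by
    show FF D a 1 = _
    unfold FF
    rfl
  linarith [h, h0, h1]

lemma eeC0 (a : ℕ) : ee D (a+1) 0 = 3 * ee D a 0 + 2 * ee D a 1 := by
  rw [ee_zero D hD0 h0D hrec, ee_zero D hD0 h0D hrec, ee_one D hD0 h0D hrec]
  rw [hrec a a, Dsym D hD0 h0D hrec a (a+1)]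
  push_cast
  ring

lemma eeC1 (a k : ℕ) : ee D (a+1) (k+1) = 2 * ee D a k + 3 * ee D a (k+1) + ee D a (k+2) := by
  show vv D (a+1) (k+1) 0 = _
  rw [vv_rec D hD0 h0D hrec]
  rw [show (0:ℕ)+1 = 1 from rfl, show (0:ℕ)+2 = 2 from rfl]
  have h1 : vv D a k 1 = vv D a k 0 + vv D a (k+1) 0 := vv_i_succ D hD0 h0D hrec a k 0
  have h2 : vv D a k 2 = vv D a k 1 + vv D a (k+1) 1 := vv_i_succ D hD0 h0D hrec a k 1
  have h3 : vv D a (k+1) 1 = vv D a (k+1) 0 + vv D a (k+2) 0 := vv_i_succ D hD0 h0D hrec a (k+1) 0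
  show vv D a k 1 + vv D a k 2 = 2 * vv D a k 0 + 3 * vv D a (k+1) 0 + vv D a (k+2) 0
  rw [h2, h3, h1]
  ring

end

def ww : ℕ → ℚ
  | 0 => 1
  | k+1 => (2:ℚ)⁻¹ ^ k

def cc : ℕ → ℚ
  | 0 => 1
  | k+1 => (-1:ℚ)^(k+1) * (2^(k+1) + 1) * (2:ℚ)⁻¹^(k+1)

lemma cc_rec (k : ℕ) : 2 * cc (k+3) + 3 * cc (k+2) + cc (k+1) = 0 := by
  show 2 * ((-1:ℚ)^(k+3) * (2^(k+3) + 1) * (2:ℚ)⁻¹^(k+3))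
      + 3 * ((-1:ℚ)^(k+2) * (2^(k+2) + 1) * (2:ℚ)⁻¹^(k+2))
      + (-1:ℚ)^(k+1) * (2^(k+1) + 1) * (2:ℚ)⁻¹^(k+1) = 0
  have h1 : ∀ c : ℕ, (-1:ℚ)^(k+c) = (-1)^k * (-1)^c := fun c => pow_add _ _ _
  have h2 : ∀ c : ℕ, (2:ℚ)^(k+c) = 2^k * 2^c := fun c => pow_add _ _ _
  have h3 : ∀ c : ℕ, (2:ℚ)⁻¹^(k+c) = 2⁻¹^k * 2⁻¹^c := fun c => pow_add _ _ _
  rw [h1, h1, h1, h2, h2, h2, h3, h3, h3]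
  norm_num
  ring

lemma sum_shift2 (u c : ℕ → ℚ) (M : ℕ) :
    ∑ k ∈ range M, u (k+2) * c (k+1)
      = (∑ k ∈ range M, u (k+1) * c k) + u (M+1) * c M - u 1 * c 0 := by
  induction M with
  | zero => simp
  | succ M ih => rw [Finset.sum_range_succ, Finset.sum_range_succ, ih]; ring

lemma SI1 (u s : ℕ → ℚ) (K : ℕ) (hu : u (K+1) = 0) :
    ∑ k ∈ range (K+1), (2:ℚ)⁻¹^k * (2 * u k * s (k+1))
      = 2 * u 0 * s 1 + ∑ k ∈ range (K+1), (2:ℚ)⁻¹^k * (u (k+1) * s (k+2)) := by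
  rw [Finset.sum_range_succ' (fun k => (2:ℚ)⁻¹^k * (2 * u k * s (k+1))) K,
      Finset.sum_range_succ (fun k => (2:ℚ)⁻¹^k * (u (k+1) * s (k+2))) K, hu]
  have h : ∀ k, (2:ℚ)⁻¹^(k+1) * (2 * u (k+1) * s (k+1+1)) = (2:ℚ)⁻¹^k * (u (k+1) * s (k+2)) := by
    intro k; rw [pow_succ]; ring
  rw [Finset.sum_congr rfl (fun k _ => h k)]
  ring

lemma key_swap (u s : ℕ → ℚ) (K : ℕ) (hK : 1 ≤ K) (hu : u K = 0) (hs : s K = 0) :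
    (∑ k ∈ range K, (2:ℚ)⁻¹^k * ((2*u k + 3*u (k+1) + u (k+2)) * s (k+1))) + (3*u 0 + 2*u 1) * s 0
  = (∑ k ∈ range K, (2:ℚ)⁻¹^k * ((2*s k + 3*s (k+1) + s (k+2)) * u (k+1))) + (3*s 0 + 2*s 1) * u 0 := by
  obtain ⟨K', rfl⟩ : ∃ K', K = K' + 1 := ⟨K-1, by omega⟩
  have expand : ∀ p q : ℕ → ℚ,
      (∑ k ∈ range (K'+1), (2:ℚ)⁻¹^k * ((2*p k + 3*p (k+1) + p (k+2)) * q (k+1)))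
      = (∑ k ∈ range (K'+1), (2:ℚ)⁻¹^k * (2 * p k * q (k+1)))
        + (∑ k ∈ range (K'+1), (2:ℚ)⁻¹^k * (p (k+1) * q (k+1))) * 3
        + (∑ k ∈ range (K'+1), (2:ℚ)⁻¹^k * (p (k+2) * q (k+1))) := by
    intro p q
    rw [Finset.sum_mul, ← Finset.sum_add_distrib, ← Finset.sum_add_distrib]
    exact Finset.sum_congr rfl (fun k _ => by ring)
  rw [expand u s, expand s u, SI1 u s K' hu, SI1 s u K' hs]
  have hQ : (∑ k ∈ range (K'+1), (2:ℚ)⁻¹^k * (s (k+1) * u (k+2)))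
      = ∑ k ∈ range (K'+1), (2:ℚ)⁻¹^k * (u (k+2) * s (k+1)) :=
    Finset.sum_congr rfl (fun k _ => by ring)
  have hB2 : (∑ k ∈ range (K'+1), (2:ℚ)⁻¹^k * (s (k+2) * u (k+1)))
      = ∑ k ∈ range (K'+1), (2:ℚ)⁻¹^k * (u (k+1) * s (k+2)) :=
    Finset.sum_congr rfl (fun k _ => by ring)
  have hM : (∑ k ∈ range (K'+1), (2:ℚ)⁻¹^k * (s (k+1) * u (k+1)))
      = ∑ k ∈ range (K'+1), (2:ℚ)⁻¹^k * (u (k+1) * s (k+1)) :=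
    Finset.sum_congr rfl (fun k _ => by ring)
  rw [hQ, hB2, hM]
  ring

lemma sum_extend (g : ℕ → ℚ) (N K : ℕ) (hNK : N ≤ K) (h : ∀ k, N ≤ k → g k = 0) :
    ∑ k ∈ range K, g k = ∑ k ∈ range N, g k := by
  refine (Finset.sum_subset (Finset.range_subset_range.2 hNK) ?_).symm
  intro x _ hnx
  exact h x (le_of_not_gt (fun hc => hnx (Finset.mem_range.2 hc)))

section
variable (D : ℕ → ℕ → ℤ) (hD0 : ∀ a : ℕ, D a 0 = 1) (h0D : ∀ b : ℕ, D 0 b = 1)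
    (hrec : ∀ a b : ℕ, D (a + 1) (b + 1) = D a (b + 1) + D a b + D (a + 1) b)

include hD0 h0D hrec

lemma ee_vanish (a k : ℕ) (h : a < k) : ee D a k = 0 := vv_vanish D hD0 h0D hrec a k 0 h

lemma expand_row (x y K : ℕ) :
    ∑ k ∈ range (K+1), ww k * ee D (x+1) k * ee D y k
      = (∑ k ∈ range K, (2:ℚ)⁻¹^k *
          ((2 * ee D x k + 3 * ee D x (k+1) + ee D x (k+2)) * ee D y (k+1)))
        + (3 * ee D x 0 + 2 * ee D x 1) * ee D y 0 := by
  rw [Finset.sum_range_succ' (fun k => ww k * ee D (x+1) k * ee D y k) K]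
  congr 1
  · refine Finset.sum_congr rfl (fun k _ => ?_)
    rw [eeC1 D hD0 h0D hrec x k, show ww (k+1) = (2:ℚ)⁻¹^k from rfl]
    ring
  · rw [eeC0 D hD0 h0D hrec x, show ww 0 = 1 from rfl]
    ring

lemma star : ∀ a b K : ℕ, a + b < K →
    ∑ k ∈ range K, ww k * ee D a k * ee D b k = (D (a+b) (a+b) : ℚ) := by
  intro a
  induction a with
  | zero =>
    intro b K hK
    rw [Finset.sum_eq_single_of_mem 0 (Finset.mem_range.2 (by omega))]
    · rw [ee_zero D hD0 h0D hrec 0, ee_zero D hD0 h0D hrec b, hD0 0,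
        show ww 0 = 1 from rfl, show (0:ℕ) + b = b from by omega]
      norm_num
    · intro k _ hne
      rw [ee_vanish D hD0 h0D hrec 0 k (by omega)]
      ring
  | succ a ih =>
    intro b K hK
    obtain ⟨K', rfl⟩ : ∃ K', K = K' + 1 := ⟨K-1, by omega⟩
    rw [expand_row D hD0 h0D hrec a b K',
      key_swap (ee D a) (ee D b) K' (by omega)
        (ee_vanish D hD0 h0D hrec a K' (by omega)) (ee_vanish D hD0 h0D hrec b K' (by omega)),
      ← expand_row D hD0 h0D hrec b a K']
    have comm : ∑ k ∈ range (K'+1), ww k * ee D (b+1) k * ee D a k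
        = ∑ k ∈ range (K'+1), ww k * ee D a k * ee D (b+1) k :=
      Finset.sum_congr rfl fun k _ => by ring
    rw [comm, ih (b+1) (K'+1) (by omega), show a + (b+1) = a + 1 + b from by omega]

lemma orth0 (K : ℕ) (hK : 1 ≤ K) : ∑ k ∈ range K, ee D 0 k * cc k = 1 := by
  rw [Finset.sum_eq_single_of_mem 0 (Finset.mem_range.2 (by omega))]
  · rw [ee_zero D hD0 h0D hrec 0, hD0 0, show cc 0 = 1 from rfl]
    norm_num
  · intro k _ hne
    rw [ee_vanish D hD0 h0D hrec 0 k (by omega)]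
    ring

lemma orthS (a K : ℕ) (hK : a + 3 ≤ K) :
    ∑ k ∈ range K, ee D (a+1) k * cc k = 0 := by
  obtain ⟨M, rfl⟩ : ∃ M, K = M + 2 := ⟨K - 2, by omega⟩
  have hM : a + 1 ≤ M := by omega
  have hvan : ∀ j, a < j → ee D a j = 0 := fun j hj => ee_vanish D hD0 h0D hrec a j hj
  rw [Finset.sum_range_succ' (fun k => ee D (a+1) k * cc k) (M+1)]
  have h1 : ∀ k, ee D (a+1) (k+1) * cc (k+1)
      = 2 * ee D a k * cc (k+1) + 3 * ee D a (k+1) * cc (k+1) + ee D a (k+2) * cc (k+1) := by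
    intro k; rw [eeC1 D hD0 h0D hrec a k]; ring
  rw [Finset.sum_congr rfl (fun k _ => h1 k), eeC0 D hD0 h0D hrec a,
    Finset.sum_add_distrib, Finset.sum_add_distrib]
  have hS1 : ∑ k ∈ range (M+1), 2 * ee D a k * cc (k+1)
      = 2 * ee D a 0 * cc 1 + ∑ k ∈ range M, 2 * ee D a (k+1) * cc (k+1+1) := by
    rw [Finset.sum_range_succ' (fun k => 2 * ee D a k * cc (k+1)) M]
    ring
  have hS2 : ∑ k ∈ range (M+1), 3 * ee D a (k+1) * cc (k+1)
      = ∑ k ∈ range M, 3 * ee D a (k+1) * cc (k+1) := by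
    rw [Finset.sum_range_succ, hvan (M+1) (by omega)]
    ring
  have hS3 : ∑ k ∈ range (M+1), ee D a (k+2) * cc (k+1)
      = (∑ k ∈ range M, ee D a (k+1) * cc k) - ee D a 1 * cc 0 := by
    rw [Finset.sum_range_succ, hvan (M+2) (by omega), sum_shift2 (ee D a) cc M,
      hvan (M+1) (by omega)]
    ring
  rw [hS1, hS2, hS3]
  have c0 : cc 0 = 1 := rfl
  have c1 : cc 1 = -(3/2) := by
    show (-1:ℚ)^(0+1) * (2^(0+1) + 1) * (2:ℚ)⁻¹^(0+1) = -(3/2)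
    norm_num
  have c2 : cc 2 = 5/4 := by
    show (-1:ℚ)^(1+1) * (2^(1+1) + 1) * (2:ℚ)⁻¹^(1+1) = 5/4
    norm_num
  have hone : ∑ k ∈ range M, ee D a (k+1) * (2 * cc (k+2) + 3 * cc (k+1) + cc k)
      = -(ee D a 1) := by
    rw [Finset.sum_eq_single_of_mem 0 (Finset.mem_range.2 (by omega))]
    · rw [c0, c1, c2]
      norm_num
    · intro k _ hk
      obtain ⟨j, rfl⟩ : ∃ j, k = j + 1 := ⟨k - 1, by omega⟩
      have hb := cc_rec j
      rw [show j+1+2 = j+3 from rfl, show j+1+1 = j+2 from rfl]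
      linear_combination ee D a (j + 2) * hb
  have hsplit : ∑ k ∈ range M, ee D a (k+1) * (2 * cc (k+2) + 3 * cc (k+1) + cc k)
      = (∑ k ∈ range M, 2 * ee D a (k+1) * cc (k+1+1))
        + (∑ k ∈ range M, 3 * ee D a (k+1) * cc (k+1))
        + ∑ k ∈ range M, ee D a (k+1) * cc k := by
    rw [← Finset.sum_add_distrib, ← Finset.sum_add_distrib]
    refine Finset.sum_congr rfl fun k _ => ?_
    rw [show k+1+1 = k+2 from rfl]
    ring
  rw [c0, c1]
  linear_combination hone - hsplit

end


def Amat (D : ℕ → ℕ → ℤ) (N : ℕ) : Matrix (Fin N) (Fin N) ℚ :=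
  Matrix.of fun a k => ee D (a : ℕ) (k : ℕ)

def Wmat (N : ℕ) : Matrix (Fin N) (Fin N) ℚ :=
  Matrix.diagonal fun k : Fin N => ww (k : ℕ)

def Hmat (D : ℕ → ℕ → ℤ) (N : ℕ) : Matrix (Fin N) (Fin N) ℚ :=
  Matrix.of fun a b : Fin N => (D ((a : ℕ) + (b : ℕ)) ((a : ℕ) + (b : ℕ)) : ℚ)

lemma ww_ne (k : ℕ) : ww k ≠ 0 := by
  cases k with
  | zero => norm_num [ww]
  | succ k =>
    show (2:ℚ)⁻¹ ^ k ≠ 0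
    positivity

section
variable (D : ℕ → ℕ → ℤ) (hD0 : ∀ a : ℕ, D a 0 = 1) (h0D : ∀ b : ℕ, D 0 b = 1)
    (hrec : ∀ a b : ℕ, D (a + 1) (b + 1) = D a (b + 1) + D a b + D (a + 1) b)

include hD0 h0D hrec

lemma hank_fact (N : ℕ) : Hmat D N = Amat D N * Wmat N * (Amat D N)ᵀ := by
  ext a b
  have h1 : (Amat D N * Wmat N * (Amat D N)ᵀ) a b
      = ∑ k : Fin N, ee D (a:ℕ) (k:ℕ) * ww (k:ℕ) * ee D (b:ℕ) (k:ℕ) := by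
    rw [Matrix.mul_apply]
    refine Finset.sum_congr rfl fun k _ => ?_
    rw [show Wmat N = Matrix.diagonal (fun k : Fin N => ww (k:ℕ)) from rfl,
      Matrix.mul_diagonal]
    rfl
  rw [h1]
  have h2 : ∑ k : Fin N, ee D (a:ℕ) (k:ℕ) * ww (k:ℕ) * ee D (b:ℕ) (k:ℕ)
      = ∑ k ∈ range N, ee D (a:ℕ) k * ww k * ee D (b:ℕ) k :=
    Fin.sum_univ_eq_sum_range (fun k => ee D (a:ℕ) k * ww k * ee D (b:ℕ) k) N
  rw [h2]
  have h3 : ∑ k ∈ range N, ee D (a:ℕ) k * ww k * ee D (b:ℕ) k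
      = ∑ k ∈ range N, ww k * ee D (a:ℕ) k * ee D (b:ℕ) k :=
    Finset.sum_congr rfl fun k _ => by ring
  rw [h3]
  have hav : (a:ℕ) < N := a.isLt
  have h4 : ∑ k ∈ range ((a:ℕ) + (b:ℕ) + 1 + N), ww k * ee D (a:ℕ) k * ee D (b:ℕ) k
      = ∑ k ∈ range N, ww k * ee D (a:ℕ) k * ee D (b:ℕ) k := by
    refine sum_extend _ N _ (by omega) fun k hk => ?_
    rw [ee_vanish D hD0 h0D hrec (a:ℕ) k (by omega)]
    ring
  rw [← h4, star D hD0 h0D hrec (a:ℕ) (b:ℕ) _ (by omega)]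
  rfl

lemma Amat_tri (N : ℕ) : (Amat D N).BlockTriangular OrderDual.toDual := by
  intro i j hij
  exact ee_vanish D hD0 h0D hrec (i:ℕ) (j:ℕ) hij

lemma Amat_det (N : ℕ) : (Amat D N).det = 2 ^ (∑ k ∈ range N, k) := by
  rw [Matrix.det_of_lowerTriangular (Amat D N) (Amat_tri D hD0 h0D hrec N)]
  have h1 : ∀ i : Fin N, Amat D N i i = 2 ^ (i : ℕ) :=
    fun i => vv_diag D hD0 h0D hrec (i : ℕ) 0
  rw [Finset.prod_congr rfl (fun i _ => h1 i), Finset.prod_pow_eq_pow_sum]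
  congr 1
  exact Fin.sum_univ_eq_sum_range (fun k => k) N

lemma Amat_adj_col (N : ℕ) (k : Fin (N+1)) :
    (Amat D (N+1)).adjugate k 0 = 2 ^ (∑ j ∈ range (N+1), j) * cc (k : ℕ) := by
  have hdet : (Amat D (N+1)).det = 2 ^ (∑ j ∈ range (N+1), j) := Amat_det D hD0 h0D hrec (N+1)
  have hdet_ne : (Amat D (N+1)).det ≠ 0 := by
    rw [hdet]; positivity
  have : Invertible (Amat D (N+1)) :=
    (Amat D (N+1)).invertibleOfIsUnitDet (isUnit_iff_ne_zero.2 hdet_ne)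
  have hinj := Matrix.mulVec_injective_of_invertible (Amat D (N+1))
  have hmv : (Amat D (N+1)).mulVec (fun k => (Amat D (N+1)).adjugate k 0)
      = (Amat D (N+1)).mulVec (fun k => 2 ^ (∑ j ∈ range (N+1), j) * cc (k : ℕ)) := by
    funext a
    have lhs1 : (Amat D (N+1)).mulVec (fun k => (Amat D (N+1)).adjugate k 0) a
        = ((Amat D (N+1)) * (Amat D (N+1)).adjugate) a 0 := by
      rw [Matrix.mul_apply]
      simp [Matrix.mulVec, dotProduct]
    rw [lhs1, Matrix.mul_adjugate, hdet]
    have rhs1 : (Amat D (N+1)).mulVec (fun k => 2 ^ (∑ j ∈ range (N+1), j) * cc (k : ℕ)) a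
        = 2 ^ (∑ j ∈ range (N+1), j) * ∑ k ∈ range (N+1), ee D (a:ℕ) k * cc k := by
      simp only [Matrix.mulVec, dotProduct]
      have e1 : ∀ k : Fin (N+1), Amat D (N+1) a k * (2 ^ (∑ j ∈ range (N+1), j) * cc (k : ℕ))
          = 2 ^ (∑ j ∈ range (N+1), j) * (ee D (a:ℕ) (k:ℕ) * cc (k : ℕ)) := fun k => by
        show ee D (a:ℕ) (k:ℕ) * _ = _
        ring
      rw [Finset.sum_congr rfl (fun k _ => e1 k), ← Finset.mul_sum]
      congr 1
      exact Fin.sum_univ_eq_sum_range (fun k => ee D (a:ℕ) k * cc k) (N+1)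
    rw [rhs1]
    rcases Nat.eq_zero_or_pos (a : ℕ) with ha | ha
    · rw [show (a:ℕ) = 0 from ha, orth0 D hD0 h0D hrec (N+1) (by omega)]
      have ha' : a = 0 := Fin.ext (by simp [ha])
      rw [ha']
      simp [Matrix.one_apply]
    · obtain ⟨a', ha'⟩ : ∃ a', (a:ℕ) = a' + 1 := ⟨(a:ℕ) - 1, by omega⟩
      have hext : ∑ k ∈ range (a' + 3 + N), ee D (a:ℕ) k * cc k
          = ∑ k ∈ range (N+1), ee D (a:ℕ) k * cc k := by
        have hav : (a:ℕ) < N + 1 := a.isLt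
        refine sum_extend _ (N+1) _ (by omega) fun k hk => ?_
        rw [ee_vanish D hD0 h0D hrec (a:ℕ) k (by omega)]
        ring
      rw [← hext, ha', orthS D hD0 h0D hrec a' _ (by omega)]
      have ha0 : a ≠ 0 := by
        intro hc
        rw [hc] at ha'
        simp at ha'
      simp [Matrix.one_apply, ha0]
  have := hinj hmv
  exact congrFun this k

end


lemma tri : ∀ m : ℕ, (m+1).choose 2 = ∑ k ∈ range (m+1), k := by
  intro m
  induction m with
  | zero => simp
  | succ m ih =>
    rw [Finset.sum_range_succ, ← ih]
    have h : (m+1+1).choose 2 = (m+1).choose 1 + (m+1).choose 2 := Nat.choose_succ_succ (m+1) 1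
    rw [Nat.choose_one_right] at h
    omega

lemma sumcc : ∀ n : ℕ, ∑ k ∈ range (n+1), (cc k)^2 * (ww k)⁻¹
    = 2^n + n + 1/2 - (2:ℚ)⁻¹^(n+1) := by
  intro n
  induction n with
  | zero =>
    rw [Finset.sum_range_one]
    norm_num [cc, ww]
  | succ n ih =>
    rw [Finset.sum_range_succ, ih]
    have hcc : cc (n+1) = (-1:ℚ)^(n+1) * (2^(n+1)+1) * (2:ℚ)⁻¹^(n+1) := rfl
    have hww : ww (n+1+1) = (2:ℚ)⁻¹^(n+1) := rfl
    have hww2 : ww (n+1) = (2:ℚ)⁻¹^n := rfl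
    have hsq : ((-1:ℚ)^(n+1))^2 = 1 := by
      rw [← pow_mul, mul_comm, pow_mul]
      norm_num
    have hx : (2:ℚ)^n ≠ 0 := by positivity
    have hterm : (cc (n+1))^2 * (ww (n+1))⁻¹
        = (2^(n+1)+1)^2 * ((2:ℚ)^(n+1))⁻¹^2 * (2:ℚ)^n := by
      rw [hcc, hww2, inv_pow, inv_pow, inv_inv]
      rw [mul_pow, mul_pow, hsq, one_mul]
    rw [hterm]
    push_cast
    rw [inv_pow, inv_pow, inv_pow]
    field_simp
    ring

lemma prodww : ∀ n : ℕ, ∏ k ∈ range (n+1), ww k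
    = 2^n * ((2:ℚ)^(∑ k ∈ range (n+1), k))⁻¹ := by
  intro n
  induction n with
  | zero => simp [ww]
  | succ n ih =>
    rw [Finset.prod_range_succ, ih, Finset.sum_range_succ (fun k => k) (n+1),
      show ww (n+1) = (2:ℚ)⁻¹^n from rfl]
    rw [inv_pow]
    have h1 : (2:ℚ)^(∑ k ∈ range (n+1), k) ≠ 0 := by positivity
    have h2 : (2:ℚ)^n ≠ 0 := by positivity
    have h3 : (2:ℚ)^(n+1) ≠ 0 := by positivity
    field_simp
    ring

end Stmt18Aux

open Finset Stmt18Aux in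
theorem stmt_18 (D : ℕ → ℕ → ℤ) (hD0 : ∀ a : ℕ, D a 0 = 1) (h0D : ∀ b : ℕ, D 0 b = 1)
    (hrec : ∀ a b : ℕ, D (a + 1) (b + 1) = D a (b + 1) + D a b + D (a + 1) b)
    (n : ℕ) (hn : 1 ≤ n) :
    Matrix.det (Matrix.of fun i j : Fin n => D (i + j + 2) (i + j + 2)) =
      2 ^ ((n + 3).choose 2 - 3) + (2 * n + 1) * 2 ^ ((n + 2).choose 2 - 2) -
        2 ^ ((n + 1).choose 2 - 1) := by
  classical
  set T : ℕ := ∑ k ∈ range (n+1), k with hTdef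
  have hadj : (Hmat D (n+1)).adjugate 0 0
      = ∑ k : Fin (n+1), (2:ℚ)^T * cc (k:ℕ) * ((2:ℚ)^T * cc (k:ℕ)) *
          ∏ j ∈ Finset.univ.erase k, ww (j:ℕ) := by
    rw [hank_fact D hD0 h0D hrec (n+1), Matrix.adjugate_mul_distrib,
      Matrix.adjugate_mul_distrib, Matrix.mul_apply]
    refine Finset.sum_congr rfl fun k _ => ?_
    have e1 : (Amat D (n+1))ᵀ.adjugate 0 k = (Amat D (n+1)).adjugate k 0 := by
      rw [← Matrix.adjugate_transpose, Matrix.transpose_apply]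
    have e2 : ((Wmat (n+1)).adjugate * (Amat D (n+1)).adjugate) k 0
        = (∏ j ∈ Finset.univ.erase k, ww (j:ℕ)) * (Amat D (n+1)).adjugate k 0 := by
      rw [show Wmat (n+1) = Matrix.diagonal (fun j : Fin (n+1) => ww (j:ℕ)) from rfl,
        Matrix.adjugate_diagonal, Matrix.diagonal_mul]
    rw [e1, e2, Amat_adj_col D hD0 h0D hrec n k]
    ring
  have hminor : (Hmat D (n+1)).adjugate 0 0
      = ((Hmat D (n+1)).submatrix Fin.succ Fin.succ).det := by
    rw [Matrix.adjugate_apply, Matrix.det_succ_row_zero]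
    have hside : ∀ j : Fin (n+1), j ∈ Finset.univ → j ≠ 0 →
        (-1:ℚ)^(j:ℕ) * ((Hmat D (n+1)).updateRow 0 (Pi.single 0 1)) 0 j *
          (((Hmat D (n+1)).updateRow 0 (Pi.single 0 1)).submatrix Fin.succ j.succAbove).det
          = 0 := by
      intro j _ hj
      rw [Matrix.updateRow_self, Pi.single_eq_of_ne hj]
      ring
    rw [Finset.sum_eq_single_of_mem 0 (Finset.mem_univ 0) hside]
    rw [Matrix.updateRow_self, Pi.single_eq_same]
    have hsub : ((Hmat D (n+1)).updateRow 0 (Pi.single 0 1)).submatrix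
        Fin.succ ((0 : Fin (n+1)).succAbove)
        = (Hmat D (n+1)).submatrix Fin.succ Fin.succ := by
      rw [Fin.succAbove_zero]
      ext i j
      rw [Matrix.submatrix_apply, Matrix.submatrix_apply,
        Matrix.updateRow_ne (Fin.succ_ne_zero i)]
    rw [hsub]
    simp
  have hprod_er : ∀ k : Fin (n+1), (∏ j ∈ Finset.univ.erase k, ww (j:ℕ))
      = (∏ j : Fin (n+1), ww (j:ℕ)) * (ww (k:ℕ))⁻¹ := by
    intro k
    rw [(Finset.mul_prod_erase Finset.univ (fun j : Fin (n+1) => ww (j:ℕ))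
        (Finset.mem_univ k)).symm, mul_comm (ww (k:ℕ)), mul_assoc,
      mul_inv_cancel₀ (ww_ne _), mul_one]
  have hsum : ∑ k : Fin (n+1), (2:ℚ)^T * cc (k:ℕ) * ((2:ℚ)^T * cc (k:ℕ)) *
          ∏ j ∈ Finset.univ.erase k, ww (j:ℕ)
      = (2:ℚ)^T * (2:ℚ)^T * (∏ j ∈ range (n+1), ww j) *
          ∑ k ∈ range (n+1), (cc k)^2 * (ww k)⁻¹ := by
    have e : ∀ k : Fin (n+1), (2:ℚ)^T * cc (k:ℕ) * ((2:ℚ)^T * cc (k:ℕ)) *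
          ∏ j ∈ Finset.univ.erase k, ww (j:ℕ)
        = (2:ℚ)^T * (2:ℚ)^T * (∏ j : Fin (n+1), ww (j:ℕ)) *
            ((cc (k:ℕ))^2 * (ww (k:ℕ))⁻¹) := by
      intro k; rw [hprod_er k]; ring
    rw [Finset.sum_congr rfl (fun k _ => e k), ← Finset.mul_sum]
    have ep : (∏ j : Fin (n+1), ww (j:ℕ)) = ∏ j ∈ range (n+1), ww j :=
      Fin.prod_univ_eq_prod_range (fun j => ww j) (n+1)
    have es : (∑ k : Fin (n+1), (cc (k:ℕ))^2 * (ww (k:ℕ))⁻¹)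
        = ∑ k ∈ range (n+1), (cc k)^2 * (ww k)⁻¹ :=
      Fin.sum_univ_eq_sum_range (fun k => (cc k)^2 * (ww k)⁻¹) (n+1)
    rw [ep, es]
  have ht1 : (n+1).choose 2 = T := tri n
  have ht2 : (n+2).choose 2 = T + (n+1) := by
    rw [tri (n+1), Finset.sum_range_succ]
  have ht3 : (n+3).choose 2 = T + (n+1) + (n+2) := by
    rw [tri (n+2), Finset.sum_range_succ, Finset.sum_range_succ]
  have hTn : n ≤ T := by
    have h := Finset.sum_range_succ (fun k => k) n
    omega
  obtain ⟨T', hT'⟩ : ∃ T', T = T' + 1 := ⟨T - 1, by omega⟩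
  have main : ((Matrix.of fun i j : Fin n => D (↑i + ↑j + 2) (↑i + ↑j + 2)).det : ℚ)
      = ((2 ^ ((n + 3).choose 2 - 3) + (2 * (n:ℤ) + 1) * 2 ^ ((n + 2).choose 2 - 2) -
        2 ^ ((n + 1).choose 2 - 1) : ℤ) : ℚ) := by
    rw [show ((((Matrix.of fun i j : Fin n => D (↑i + ↑j + 2) (↑i + ↑j + 2)).det : ℤ)) : ℚ)
        = (Int.castRingHom ℚ) (Matrix.of fun i j : Fin n => D (↑i + ↑j + 2) (↑i + ↑j + 2)).det
        from rfl, RingHom.map_det, RingHom.mapMatrix_apply]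
    have hmap : (Matrix.of fun i j : Fin n => D (↑i + ↑j + 2) (↑i + ↑j + 2)).map
        (Int.castRingHom ℚ) = (Hmat D (n+1)).submatrix Fin.succ Fin.succ := by
      ext i j
      show ((D ((i:ℕ) + (j:ℕ) + 2) ((i:ℕ) + (j:ℕ) + 2) : ℤ) : ℚ) = _
      rw [Matrix.submatrix_apply]
      show _ = ((D (((Fin.succ i : Fin (n+1)):ℕ) + ((Fin.succ j : Fin (n+1)):ℕ))
          (((Fin.succ i : Fin (n+1)):ℕ) + ((Fin.succ j : Fin (n+1)):ℕ)) : ℤ) : ℚ)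
      rw [Fin.val_succ, Fin.val_succ, show (i:ℕ)+1+((j:ℕ)+1) = (i:ℕ)+(j:ℕ)+2 from by omega]
    rw [hmap, ← hminor, hadj, hsum, prodww n, sumcc n, ← hTdef]
    push_cast
    rw [show (n + 3).choose 2 - 3 = T' + 1 + 2*n from by omega,
      show (n + 2).choose 2 - 2 = T' + n from by omega,
      show (n + 1).choose 2 - 1 = T' from by omega, hT']
    have h2 : (2:ℚ)^n ≠ 0 := by positivity
    have h3 : (2:ℚ)^T' ≠ 0 := by positivity
    rw [inv_pow]
    field_simp
    ring
  exact_mod_cast main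
end

section
/- Let $A$ be an $n\times n$ matrix over a commutative ring with $n\ge 2$, and for subsets of deleted rows/columns let $A^{i}_{j}$ denote the minor obtained by deleting row $i$ and column $j$, and $A^{1,n}_{1,n}$ the minor deleting rows $1,n$ and columns $1,n$. Then $\det A\cdot \det A^{1,n}_{1,n} = \det A^{1}_{1}\cdot\det A^{n}_{n} - \det A^{1}_{n}\cdot\det A^{n}_{1}$ (Desnanot–Jacobi / Dodgson condensation identity). -/
open Matrix

namespace StmtAux

variable {n : ℕ}

def embFun (n : ℕ) : (Fin n ⊕ Fin 2) → Fin (n + 2) :=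
  Sum.elim (fun i : Fin n => i.succ.castSucc)
    (fun r : Fin 2 => if (r : ℕ) = 0 then 0 else Fin.last (n + 1))

lemma embFun_val (n : ℕ) (x : Fin n ⊕ Fin 2) :
    (embFun n x : ℕ) = Sum.elim (fun i : Fin n => (i : ℕ) + 1)
      (fun r : Fin 2 => if (r : ℕ) = 0 then 0 else n + 1) x := by
  rcases x with i | r
  · rfl
  · by_cases h : r = 0 <;> simp [embFun, h]

/-- Interleaving equivalence: middle indices on the left, `{0, last}` on the right. -/
noncomputable def emb (n : ℕ) : (Fin n ⊕ Fin 2) ≃ Fin (n + 2) :=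
  Equiv.ofBijective (embFun n) <| by
    rw [Fintype.bijective_iff_injective_and_card]
    refine ⟨fun x y h => ?_, by simp⟩
    have h' := congrArg Fin.val h
    rw [embFun_val, embFun_val] at h'
    rcases x with i | r <;> rcases y with j | s
    · simp only [Sum.elim_inl] at h'
      exact congrArg Sum.inl (Fin.ext (by omega))
    · exfalso
      rcases (by omega : (s : ℕ) = 0 ∨ (s : ℕ) = 1) with hs | hs <;>
        simp only [Sum.elim_inl, Sum.elim_inr, hs, if_true, if_false,
          Nat.one_ne_zero] at h' <;> omega
    · exfalso
      rcases (by omega : (r : ℕ) = 0 ∨ (r : ℕ) = 1) with hr | hr <;>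
        simp only [Sum.elim_inl, Sum.elim_inr, hr, if_true, if_false,
          Nat.one_ne_zero] at h' <;> omega
    · congr 1
      refine Fin.ext ?_
      rcases (by omega : (r : ℕ) = 0 ∨ (r : ℕ) = 1) with hr | hr <;>
        rcases (by omega : (s : ℕ) = 0 ∨ (s : ℕ) = 1) with hs | hs <;>
          simp only [Sum.elim_inr, hr, hs, if_true, if_false, Nat.one_ne_zero] at h' ⊢ <;>
            omega

@[simp] lemma emb_inl {n : ℕ} (i : Fin n) : emb n (Sum.inl i) = i.succ.castSucc := rfl

@[simp] lemma emb_inr_zero {n : ℕ} : emb n (Sum.inr 0) = 0 := rfl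

@[simp] lemma emb_inr_one {n : ℕ} : emb n (Sum.inr 1) = Fin.last (n + 1) := by
  show (if ((1 : Fin 2) : ℕ) = 0 then (0 : Fin (n + 2)) else Fin.last (n + 1)) = _
  simp

variable {R : Type*} [CommRing R]

/-- The key identity multiplied by `det A`; holds over any commutative ring. -/
lemma key_mul (A : Matrix (Fin (n + 2)) (Fin (n + 2)) R) :
    A.det * ((A.submatrix Fin.succ Fin.succ).det *
          (A.submatrix Fin.castSucc Fin.castSucc).det -
        (A.submatrix Fin.succ Fin.castSucc).det *
          (A.submatrix Fin.castSucc Fin.succ).det) =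
      A.det * (A.det * (A.submatrix (fun i : Fin n => i.succ.castSucc)
          (fun j : Fin n => j.succ.castSucc)).det) := by
  classical
  set M := adjugate A with hM
  -- P : identity with first and last columns replaced by adjugate columns
  set P : Matrix (Fin (n + 2)) (Fin (n + 2)) R :=
    ((1 : Matrix (Fin (n + 2)) (Fin (n + 2)) R).updateCol 0 (fun i => M i 0)).updateCol
      (Fin.last (n + 1)) (fun i => M i (Fin.last (n + 1))) with hP
  have hlast0 : (Fin.last (n + 1) : Fin (n + 2)) ≠ 0 := by
    intro h
    have := congrArg Fin.val h
    simp at this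
  have hmid0 : ∀ i : Fin n, (i.succ.castSucc : Fin (n + 2)) ≠ 0 := by
    intro i h
    have := congrArg Fin.val h
    simp at this
  have hmidlast : ∀ i : Fin n, (i.succ.castSucc : Fin (n + 2)) ≠ Fin.last (n + 1) := by
    intro i h
    have := congrArg Fin.val h
    simp only [Fin.coe_castSucc, Fin.val_succ, Fin.val_last] at this
    omega
  -- compute det P
  have hPdet : P.det =
      M 0 0 * M (Fin.last (n + 1)) (Fin.last (n + 1)) -
        M 0 (Fin.last (n + 1)) * M (Fin.last (n + 1)) 0 := by
    have hsub : P.submatrix (emb n) (emb n) =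
        fromBlocks 1 (Matrix.of fun i r => M i.succ.castSucc (emb n (Sum.inr r))) 0
          (Matrix.of fun r s => M (emb n (Sum.inr r)) (emb n (Sum.inr s))) := by
      ext x y
      rcases x with i | r <;> rcases y with j | s
      · simp only [submatrix_apply, emb_inl, hP, updateCol_apply,
          if_neg (hmidlast j), if_neg (hmid0 j), fromBlocks_apply₁₁]
        by_cases h : i = j
        · subst h; simp
        · rw [one_apply_ne, one_apply_ne h]
          simp only [ne_eq, Fin.castSucc_inj, Fin.succ_inj]
          exact h
      · fin_cases s <;>
          simp [hP, updateCol_apply, hlast0, hmidlast, hmid0]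
      · fin_cases r <;>
          simp [hP, updateCol_apply, hlast0, Ne.symm (hmid0 j), Ne.symm (hmidlast j),
            one_apply, Fin.ext_iff, Fin.val_last] <;> simp [j.isLt.ne, j.isLt.ne']
      · fin_cases r <;> fin_cases s <;>
          simp [hP, updateCol_apply, hlast0]
    calc P.det = (P.submatrix (emb n) (emb n)).det := (det_submatrix_equiv_self _ _).symm
      _ = _ := by
          rw [hsub, det_fromBlocks_zero₂₁, det_one, one_mul, det_fin_two]
          simp
  -- compute det (A * P)
  have hAP : (A * P).det =
      A.det * A.det * (A.submatrix (fun i : Fin n => i.succ.castSucc)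
          (fun j : Fin n => j.succ.castSucc)).det := by
    have hAPcol : ∀ i j, (A * P) i j =
        if j = 0 ∨ j = Fin.last (n + 1) then A.det * (1 : Matrix _ _ R) i j else A i j := by
      intro i j
      by_cases h0 : j = 0
      · subst h0
        have : (A * P) i 0 = (A * M) i 0 := by
          simp only [mul_apply, hP, updateCol_apply, hlast0, if_neg (Ne.symm hlast0)]
          simp
        rw [this, hM, mul_adjugate]
        simp
      by_cases hl : j = Fin.last (n + 1)
      · subst hl
        have : (A * P) i (Fin.last (n + 1)) = (A * M) i (Fin.last (n + 1)) := by
          simp only [mul_apply, hP, updateCol_apply]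
          simp
        rw [this, hM, mul_adjugate]
        simp [hlast0]
      · have : (A * P) i j = ∑ k, A i k * (if k = j then 1 else 0) := by
          simp only [mul_apply, hP, updateCol_apply, if_neg hl, if_neg h0, one_apply]
        rw [this]
        simp [h0, hl]
    have hsub : (A * P).submatrix (emb n) (emb n) =
        fromBlocks (A.submatrix (fun i : Fin n => i.succ.castSucc)
            (fun j : Fin n => j.succ.castSucc)) 0
          (Matrix.of fun r i => A (emb n (Sum.inr r)) i.succ.castSucc)
          (A.det • (1 : Matrix (Fin 2) (Fin 2) R)) := by
      ext x y
      rcases x with i | r <;> rcases y with j | s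
      · rw [submatrix_apply, hAPcol]
        simp [hmid0 j, hmidlast j]
      · rw [submatrix_apply, hAPcol]
        fin_cases s <;> simp [one_apply, hmid0 i, hmidlast i, Fin.succ_ne_zero]
      · rw [submatrix_apply, hAPcol]
        simp [hmid0 j, hmidlast j]
      · rw [submatrix_apply, hAPcol]
        fin_cases r <;> fin_cases s <;>
          simp [one_apply, hlast0, Ne.symm hlast0]
    calc (A * P).det = ((A * P).submatrix (emb n) (emb n)).det :=
          (det_submatrix_equiv_self _ _).symm
      _ = _ := by
          rw [hsub, det_fromBlocks_zero₁₂, smul_one_eq_diagonal, det_diagonal]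
          simp [Fin.prod_univ_two]
          ring
  -- adjugate entries are signed minors
  have h00 : M 0 0 = (A.submatrix Fin.succ Fin.succ).det := by
    rw [hM, adjugate_fin_succ_eq_det_submatrix]
    simp [Fin.succAbove_zero]
  have hll : M (Fin.last (n + 1)) (Fin.last (n + 1)) =
      (A.submatrix Fin.castSucc Fin.castSucc).det := by
    rw [hM, adjugate_fin_succ_eq_det_submatrix]
    simp [Fin.succAbove_last, ← two_mul, pow_mul]
  have h0l : M 0 (Fin.last (n + 1)) =
      (-1 : R) ^ (n + 1) * (A.submatrix Fin.castSucc Fin.succ).det := by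
    rw [hM, adjugate_fin_succ_eq_det_submatrix]
    simp [Fin.succAbove_zero, Fin.succAbove_last]
  have hl0 : M (Fin.last (n + 1)) 0 =
      (-1 : R) ^ (n + 1) * (A.submatrix Fin.succ Fin.castSucc).det := by
    rw [hM, adjugate_fin_succ_eq_det_submatrix]
    simp [Fin.succAbove_zero, Fin.succAbove_last]
  have hmain : A.det * P.det = (A * P).det := (det_mul A P).symm
  rw [hPdet, hAP, h00, hll, h0l, hl0] at hmain
  calc A.det * _ = A.det * ((A.submatrix Fin.succ Fin.succ).det *
          (A.submatrix Fin.castSucc Fin.castSucc).det -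
        (-1 : R) ^ (n + 1) * (A.submatrix Fin.castSucc Fin.succ).det *
          ((-1 : R) ^ (n + 1) * (A.submatrix Fin.succ Fin.castSucc).det)) := by
        rw [show ((-1 : R) ^ (n + 1) * (A.submatrix Fin.castSucc Fin.succ).det *
            ((-1 : R) ^ (n + 1) * (A.submatrix Fin.succ Fin.castSucc).det)) =
            ((-1 : R) ^ (n + 1) * (-1 : R) ^ (n + 1)) *
              ((A.submatrix Fin.succ Fin.castSucc).det *
                (A.submatrix Fin.castSucc Fin.succ).det) by ring,
          ← pow_add, ← two_mul, pow_mul]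
        simp
    _ = A.det * A.det * (A.submatrix (fun i : Fin n => i.succ.castSucc)
          (fun j : Fin n => j.succ.castSucc)).det := hmain
    _ = _ := by ring

end StmtAux

theorem stmt_19 {R : Type*} [CommRing R] (n : ℕ)
    (A : Matrix (Fin (n + 2)) (Fin (n + 2)) R) :
    A.det * (A.submatrix (fun i : Fin n => i.succ.castSucc)
        (fun j : Fin n => j.succ.castSucc)).det =
      (A.submatrix Fin.succ Fin.succ).det *
          (A.submatrix Fin.castSucc Fin.castSucc).det -
        (A.submatrix Fin.succ Fin.castSucc).det *
          (A.submatrix Fin.castSucc Fin.succ).det := by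
  classical
  -- First prove the identity for the generic matrix over ℤ, where `det` cancels.
  set S := MvPolynomial (Fin (n + 2) × Fin (n + 2)) ℤ
  set X : Matrix (Fin (n + 2)) (Fin (n + 2)) S := Matrix.mvPolynomialX _ _ ℤ with hX
  have hgen : X.det * (X.submatrix (fun i : Fin n => i.succ.castSucc)
        (fun j : Fin n => j.succ.castSucc)).det =
      (X.submatrix Fin.succ Fin.succ).det *
          (X.submatrix Fin.castSucc Fin.castSucc).det -
        (X.submatrix Fin.succ Fin.castSucc).det *
          (X.submatrix Fin.castSucc Fin.succ).det := by
    have h := StmtAux.key_mul (n := n) X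
    have hd : X.det ≠ 0 := hX ▸ Matrix.det_mvPolynomialX_ne_zero _ _
    exact (mul_left_cancel₀ hd h).symm
  -- Now specialize via the evaluation ring hom.
  let f : S →+* R := MvPolynomial.eval₂Hom (Int.castRingHom R)
    (fun p : Fin (n + 2) × Fin (n + 2) => A p.1 p.2)
  have hXA : X.map f = A := by
    rw [hX]
    exact Matrix.mvPolynomialX_map_eval₂ _ A
  have := congrArg f hgen
  simp only [_root_.map_mul, map_sub, RingHom.map_det, RingHom.mapMatrix_apply, ← Matrix.submatrix_map, hXA] at this
  exact this
end
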